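/- For a unit vector |ψ⟩ ∈ ℂ^d, M_α(ψ) = 0 for α ≥ 2 if and only if the probability distribution P_a(ψ) = (1/d)|⟨ψ|D_a|ψ⟩|² is uniform (equal to 1/d) on exactly d values of a and zero elsewhere, i.e., |⟨ψ|D_a|ψ⟩| ∈ {0, 1} for all a. -/

import Mathlib

/-!
Write `c_a = ⟨ψ|D_a|ψ⟩`. By Cauchy–Schwarz `|c_a| ≤ 1`, and for fixed `a₁` the map
`a₂ ↦ c_a` is, up to unimodular phases, the discrete Fourier transform of
`k ↦ conj ψ(k + a₁) ψ(k)`, so Parseval gives `∑_a |c_a|² = d`. Hence `P_a = |c_a|²/d` is a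
probability distribution bounded by `1/d`. For `α > 1` this gives `P_a^α ≤ d^{1-α} P_a`, with
equality iff `P_a ∈ {0, 1/d}`; summing, `∑_a P_a^α ≤ d^{1-α}`, i.e. `M_α(ψ) ≥ 0`, with equality
exactly when every `P_a` is `0` or `1/d`, and then `∑_a P_a = 1` forces exactly `d` of them
to be nonzero.
-/

open scoped BigOperators Kronecker
open Matrix

noncomputable section

/-- The primitive `d`-th root of unity `ω = e^{2πi/d}`. -/
def omega (d : ℕ) : ℂ := Complex.exp (2 * Real.pi * Complex.I / d)

/-- A fixed square root of `ω`: `τ = e^{πi/d}`, so `τ ^ 2 = ω`. -/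
def tau (d : ℕ) : ℂ := Complex.exp (Real.pi * Complex.I / d)

/-- Weyl–Heisenberg displacement operator `D_a = ω^{a₁a₂/2} X^{a₁} Z^{a₂}` on `ℂ^d`,
where `X |k⟩ = |k+1⟩` is the shift and `Z |k⟩ = ω^k |k⟩` is the clock (arithmetic mod `d`). -/
def Disp (d : ℕ) (a : ℤ × ℤ) : Matrix (ZMod d) (ZMod d) ℂ := fun j k =>
  tau d ^ (a.1 * a.2) * omega d ^ (a.2 * (k.val : ℤ)) * (if j = k + (a.1 : ZMod d) then 1 else 0)

/-- Rank-one projector `|v⟩⟨v|`. -/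
def proj {n : Type*} (v : n → ℂ) : Matrix n n ℂ := Matrix.vecMulVec v (star v)

/-- Stabilizer entropy of order `α` of a state `ρ` on `ℂ^d`. -/
def stabEntropy (d : ℕ) [NeZero d] (α : ℝ) (ρ : Matrix (ZMod d) (ZMod d) ℂ) : ℝ :=
  (1 / (1 - α)) * Real.log (∑ a : ZMod d × ZMod d,
      ((1 / d) * norm (Disp d ((a.1.val : ℤ), (a.2.val : ℤ)) * ρ).trace ^ 2) ^ α)
    - Real.log d

open ComplexConjugate

theorem sum_norm_sq_sum_mulShift {R : Type*} [CommRing R] [Fintype R] [DecidableEq R]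
    {ψ : AddChar R ℂ} (hψ : ψ.IsPrimitive) (f : R → ℂ) :
    ∑ b, ‖∑ k, ψ (b * k) * f k‖ ^ 2 = Fintype.card R * ∑ k, ‖f k‖ ^ 2 := by
  have hsq : ∀ z : ℂ, ((‖z‖ ^ 2 : ℝ) : ℂ) = z * conj z := fun z => by
    rw [Complex.mul_conj, Complex.normSq_eq_norm_sq]
  apply Complex.ofReal_injective
  simp only [Complex.ofReal_sum, Complex.ofReal_mul, Complex.ofReal_natCast, hsq]
  simp only [map_sum, map_mul, ← AddChar.map_neg_eq_conj, Finset.sum_mul_sum]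
  calc ∑ b, ∑ k, ∑ k', ψ (b * k) * f k * (ψ (-(b * k')) * conj (f k'))
      = ∑ k, ∑ k', f k * conj (f k') * ∑ b, ψ (b * (k - k')) := by
        rw [Finset.sum_comm]
        refine Finset.sum_congr rfl fun k _ => ?_
        rw [Finset.sum_comm]
        refine Finset.sum_congr rfl fun k' _ => ?_
        rw [Finset.mul_sum]
        refine Finset.sum_congr rfl fun b _ => ?_
        rw [mul_sub, sub_eq_add_neg, AddChar.map_add_eq_mul]
        ring
    _ = Fintype.card R * ∑ k, f k * conj (f k) := by
        simp only [AddChar.sum_mulShift _ hψ, sub_eq_zero, Nat.cast_ite, Nat.cast_zero, mul_ite,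
          mul_zero, Finset.sum_ite_eq, Finset.mem_univ, if_true, Finset.mul_sum]
        exact Finset.sum_congr rfl fun k _ => mul_comm _ _

lemma trace_mul_proj {n : Type*} [Fintype n] (M : Matrix n n ℂ) (v : n → ℂ) :
    (M * proj v).trace = star v ⬝ᵥ M *ᵥ v := by
  rw [proj, mul_vecMulVec, trace_vecMulVec, dotProduct_comm]

section Renyi

variable {x m α : ℝ}

lemma rpow_eq_rpow_sub_one_mul (hα : α ≠ 0) (hx : 0 ≤ x) : x ^ α = x ^ (α - 1) * x := by
  rw [← Real.rpow_add_one' hx (by simpa using hα), sub_add_cancel]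

lemma rpow_le_rpow_sub_one_mul (hα : 1 ≤ α) (hx : 0 ≤ x) (hxm : x ≤ m) :
    x ^ α ≤ m ^ (α - 1) * x := by
  rw [rpow_eq_rpow_sub_one_mul (by linarith) hx]
  exact mul_le_mul_of_nonneg_right (Real.rpow_le_rpow hx hxm (by linarith)) hx

lemma rpow_eq_rpow_sub_one_mul_iff (hα : 1 < α) (hx : 0 ≤ x) (hm : 0 ≤ m) :
    x ^ α = m ^ (α - 1) * x ↔ x = 0 ∨ x = m := by
  rw [rpow_eq_rpow_sub_one_mul (by linarith) hx, mul_eq_mul_right_iff,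
    Real.rpow_left_inj hx hm (by linarith), or_comm]

theorem sum_rpow_eq_iff_forall_eq_zero_or_eq {ι : Type*} [Fintype ι] {P : ι → ℝ}
    (hα : 1 < α) (hm : 0 ≤ m) (hP : ∀ a, 0 ≤ P a) (hPm : ∀ a, P a ≤ m) :
    ∑ a, P a ^ α = m ^ (α - 1) * ∑ a, P a ↔ ∀ a, P a = 0 ∨ P a = m := by
  rw [Finset.mul_sum,
    Finset.sum_eq_sum_iff_of_le fun a _ => rpow_le_rpow_sub_one_mul hα.le (hP a) (hPm a)]
  simp only [Finset.mem_univ, true_implies, rpow_eq_rpow_sub_one_mul_iff hα (hP _) hm]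

lemma one_div_one_sub_mul_log_eq_log_iff {S D : ℝ} (hα : α ≠ 1) (hS : 0 < S) (hD : 0 < D) :
    1 / (1 - α) * Real.log S = Real.log D ↔ S = D ^ (1 - α) := by
  have h1α : 1 - α ≠ 0 := sub_ne_zero.mpr hα.symm
  rw [← Real.log_injOn_pos.eq_iff hS (Real.rpow_pos_of_pos hD _), Real.log_rpow hD]
  field_simp

def renyiEntropy {ι : Type*} [Fintype ι] (α : ℝ) (P : ι → ℝ) : ℝ :=
  1 / (1 - α) * Real.log (∑ a, P a ^ α)

theorem renyiEntropy_eq_log_iff {ι : Type*} [Fintype ι] {P : ι → ℝ} {D : ℝ} (hα : 1 < α)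
    (hD : 0 < D) (hP : ∀ a, 0 ≤ P a) (hPD : ∀ a, P a ≤ 1 / D) (hsum : ∑ a, P a = 1) :
    renyiEntropy α P = Real.log D ↔ ∀ a, P a = 0 ∨ P a = 1 / D := by
  obtain ⟨a₀, -, ha₀⟩ := Finset.exists_ne_zero_of_sum_ne_zero (hsum.trans_ne one_ne_zero)
  have hS : 0 < ∑ a, P a ^ α := Finset.sum_pos' (fun a _ => Real.rpow_nonneg (hP a) α)
    ⟨a₀, Finset.mem_univ _, Real.rpow_pos_of_pos ((hP a₀).lt_of_ne' ha₀) α⟩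
  rw [renyiEntropy, one_div_one_sub_mul_log_eq_log_iff hα.ne' hS hD,
    ← sum_rpow_eq_iff_forall_eq_zero_or_eq hα (by positivity) hP hPD, hsum, mul_one, one_div,
    Real.inv_rpow hD.le, ← Real.rpow_neg hD.le, neg_sub]

end Renyi

theorem card_filter_ne_zero_nsmul_eq_sum {ι M : Type*} [Fintype ι] [AddCommMonoid M]
    {P : ι → M} {m : M} [DecidablePred fun a => P a ≠ 0] (hP : ∀ a, P a = 0 ∨ P a = m) :
    (Finset.univ.filter fun a => P a ≠ 0).card • m = ∑ a, P a := by
  rw [← Finset.sum_filter_ne_zero, ← Finset.sum_const]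
  refine Finset.sum_congr rfl fun a ha => ?_
  exact ((hP a).resolve_left (Finset.mem_filter.mp ha).2).symm

lemma omega_zpow (d : ℕ) [NeZero d] (n : ℤ) : omega d ^ n = ZMod.stdAddChar (n : ZMod d) := by
  rw [ZMod.stdAddChar_coe, omega, ← Complex.exp_int_mul]
  ring_nf

lemma norm_tau (d : ℕ) : ‖tau d‖ = 1 := by
  simp [tau, Complex.norm_exp, Complex.div_re]

def dispExpect (d : ℕ) [NeZero d] (ψ : ZMod d → ℂ) (a : ZMod d × ZMod d) : ℂ :=
  star ψ ⬝ᵥ (Disp d ((a.1.val : ℤ), (a.2.val : ℤ))).mulVec ψ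

lemma dispExpect_eq (d : ℕ) [NeZero d] (ψ : ZMod d → ℂ) (a : ZMod d × ZMod d) :
    dispExpect d ψ a = tau d ^ ((a.1.val : ℤ) * a.2.val) *
      ∑ k, ZMod.stdAddChar (a.2 * k) * (conj (ψ (k + a.1)) * ψ k) := by
  have hcast : ((a.1.val : ℤ) : ZMod d) = a.1 := by simp
  have hchar : ∀ k : ZMod d, omega d ^ ((a.2.val : ℤ) * k.val) = ZMod.stdAddChar (a.2 * k) := by
    intro k
    rw [omega_zpow]
    push_cast
    simp
  simp only [dispExpect, Disp, dotProduct, mulVec, Pi.star_apply, Finset.mul_sum, hcast, hchar]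
  rw [Finset.sum_comm]
  refine Finset.sum_congr rfl fun k _ => ?_
  rw [Finset.sum_eq_single (k + a.1) (fun j _ hj => by simp [hj]) (by simp), if_pos rfl,
    Complex.star_def]
  ring

section UnitVector

variable {d : ℕ} [NeZero d] {ψ : ZMod d → ℂ}

lemma norm_dispExpect_le_one (hψ : ∑ k, ‖ψ k‖ ^ 2 = 1) (a : ZMod d × ZMod d) :
    ‖dispExpect d ψ a‖ ≤ 1 := by
  rw [dispExpect_eq, norm_mul, norm_zpow, norm_tau, _root_.one_zpow, one_mul]
  calc ‖∑ k, ZMod.stdAddChar (a.2 * k) * (conj (ψ (k + a.1)) * ψ k)‖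
      ≤ ∑ k, ‖ψ (k + a.1)‖ * ‖ψ k‖ := by
        refine (norm_sum_le _ _).trans_eq (Finset.sum_congr rfl fun k _ => ?_)
        rw [norm_mul, norm_mul, AddChar.norm_apply, Complex.norm_conj, one_mul]
    _ ≤ √(∑ k, ‖ψ (k + a.1)‖ ^ 2) * √(∑ k, ‖ψ k‖ ^ 2) := Real.sum_mul_le_sqrt_mul_sqrt _ _ _
    _ = 1 := by
        have hshift : ∑ k, ‖ψ (k + a.1)‖ ^ 2 = 1 :=
          (Fintype.sum_equiv (Equiv.addRight a.1) _ _ fun _ => rfl).trans hψ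
        rw [hshift, hψ, Real.sqrt_one, one_mul]

lemma sum_norm_sq_dispExpect (hψ : ∑ k, ‖ψ k‖ ^ 2 = 1) :
    ∑ a, ‖dispExpect d ψ a‖ ^ 2 = d := by
  simp only [dispExpect_eq, norm_mul, norm_zpow, norm_tau, _root_.one_zpow, one_mul]
  calc ∑ a : ZMod d × ZMod d, ‖∑ k, ZMod.stdAddChar (a.2 * k) * (conj (ψ (k + a.1)) * ψ k)‖ ^ 2
      = ∑ c, d * ∑ k, ‖ψ (k + c)‖ ^ 2 * ‖ψ k‖ ^ 2 := by
        rw [Fintype.sum_prod_type]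
        dsimp only
        refine Finset.sum_congr rfl fun c _ => ?_
        rw [sum_norm_sq_sum_mulShift (ZMod.isPrimitive_stdAddChar d), ZMod.card]
        simp only [norm_mul, Complex.norm_conj, mul_pow]
    _ = d * ∑ k, (∑ c, ‖ψ (k + c)‖ ^ 2) * ‖ψ k‖ ^ 2 := by
        rw [← Finset.mul_sum, Finset.sum_comm]
        simp only [Finset.sum_mul]
    _ = d := by
        have hshift (k : ZMod d) : ∑ c, ‖ψ (k + c)‖ ^ 2 = 1 :=
          (Fintype.sum_equiv (Equiv.addLeft k) _ _ fun _ => rfl).trans hψ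
        simp only [hshift, one_mul, hψ, mul_one]

end UnitVector

/-- For a unit vector `ψ ∈ ℂ^d` and `α ≥ 2`, `M_α(ψ) = 0` iff the distribution
`P_a(ψ) = (1/d)|⟨ψ|D_a|ψ⟩|²` is uniform (`= 1/d`) on exactly `d` values of `a` and zero
elsewhere, i.e. `|⟨ψ|D_a|ψ⟩| ∈ {0, 1}` for all `a`. -/
theorem stabEntropy_eq_zero_iff (d : ℕ) [NeZero d] (α : ℝ) (hα : 2 ≤ α)
    (ψ : ZMod d → ℂ) (hψ : ∑ k, norm (ψ k) ^ 2 = 1) :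
    stabEntropy d α (proj ψ) = 0 ↔
      ((Finset.univ.filter (fun a : ZMod d × ZMod d =>
          (1 / d : ℝ) * norm (star ψ ⬝ᵥ
            ((Disp d ((a.1.val : ℤ), (a.2.val : ℤ))).mulVec ψ)) ^ 2 ≠ 0)).card = d ∧
       (∀ a : ZMod d × ZMod d,
          (1 / d : ℝ) * norm (star ψ ⬝ᵥ
            ((Disp d ((a.1.val : ℤ), (a.2.val : ℤ))).mulVec ψ)) ^ 2 = 0 ∨
          (1 / d : ℝ) * norm (star ψ ⬝ᵥ
            ((Disp d ((a.1.val : ℤ), (a.2.val : ℤ))).mulVec ψ)) ^ 2 = 1 / d) ∧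
       (∀ a : ZMod d × ZMod d,
          norm (star ψ ⬝ᵥ
            ((Disp d ((a.1.val : ℤ), (a.2.val : ℤ))).mulVec ψ)) = 0 ∨
          norm (star ψ ⬝ᵥ
            ((Disp d ((a.1.val : ℤ), (a.2.val : ℤ))).mulVec ψ)) = 1)) := by
  have hd : (0 : ℝ) < d := by exact_mod_cast NeZero.pos d
  set P : ZMod d × ZMod d → ℝ := fun a => 1 / d * ‖dispExpect d ψ a‖ ^ 2
  have hPle (a) : P a ≤ 1 / d :=
    mul_le_of_le_one_right (by positivity)
      (pow_le_one₀ (norm_nonneg _) (norm_dispExpect_le_one hψ a))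
  have hPsum : ∑ a, P a = 1 := by
    rw [← Finset.mul_sum, sum_norm_sq_dispExpect hψ, one_div_mul_cancel hd.ne']
  have hentropy : stabEntropy d α (proj ψ) = 0 ↔ ∀ a, P a = 0 ∨ P a = 1 / d := by
    have hE : stabEntropy d α (proj ψ) = renyiEntropy α P - Real.log d := by
      simp only [stabEntropy, trace_mul_proj]
      rfl
    rw [hE, sub_eq_zero,
      renyiEntropy_eq_log_iff (by linarith) hd (fun a => by positivity) hPle hPsum]
  have hnorm (a) : P a = 0 ∨ P a = 1 / d → ‖dispExpect d ψ a‖ = 0 ∨ ‖dispExpect d ψ a‖ = 1 := by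
    rintro (h | h)
    · exact Or.inl (by simpa [P, hd.ne'] using h)
    · refine Or.inr ((pow_eq_one_iff_of_nonneg (norm_nonneg _) two_ne_zero).mp ?_)
      simpa [P, hd.ne'] using h
  refine hentropy.trans ⟨fun h => ⟨?_, h, fun a => hnorm a (h a)⟩, fun h => h.2.1⟩
  have hcard := card_filter_ne_zero_nsmul_eq_sum h
  rw [hPsum, nsmul_eq_mul, mul_one_div, div_eq_one_iff_eq hd.ne'] at hcard
  exact_mod_cast hcard
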